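/- Let T be a tree, τ a threshold function on T, S₀ a target set of T, and suppose S₀ activates a vertex v at time t (i.e., v ∈ I_τ^t(S₀) \ I_τ^{t−1}(S₀)). Then there exists a path P = (v₀, v₁, …, v_t = v) in T such that v_i ∈ I_τ^i(S₀) \ I_τ^{i−1}(S₀) for each i ≥ 1 and v₀ ∈ S₀, and every internal vertex v_i (0 < i < t) of P satisfies τ(v_i) < deg(v_i). -/

import Mathlib

/-!
Walk backwards from `v`. A vertex activated at time `i ≥ 1` was not activated at time `i - 1`,
although its active neighbours at time `i - 1` already reach its threshold; hence one of those
neighbours was activated exactly at time `i - 1`. Iterating gives a path whose `i`-th vertex is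
activated exactly at time `i`, so its vertices are distinct. An internal vertex `vᵢ` has the
neighbour `vᵢ₊₁`, inactive at time `i - 1`, and still reaches its threshold at time `i`:
so `τ(vᵢ)` is smaller than its degree.
-/

namespace TSS

variable {V : Type*}

/-- The interval (one activation step): `S` together with all vertices having
at least `τ v` neighbors in `S`. -/
def interval (G : SimpleGraph V) (τ : V → ℕ) (S : Set V) : Set V :=
  S ∪ {v | τ v ≤ (G.neighborSet v ∩ S).ncard}

/-- `S` is a target set if iterating the interval operator reaches all of `V`. -/
def IsTargetSet (G : SimpleGraph V) (τ : V → ℕ) (S : Set V) : Prop :=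
  ∃ t : ℕ, (interval G τ)^[t] S = Set.univ

/-- The activation time of a set: least `t` with `I^[t+1] S = I^[t] S`. -/
noncomputable def actTime (G : SimpleGraph V) (τ : V → ℕ) (S : Set V) : ℕ :=
  sInf {t : ℕ | (interval G τ)^[t + 1] S = (interval G τ)^[t] S}

/-- The maximum activation time over all target sets. -/
noncomputable def maxTime (G : SimpleGraph V) (τ : V → ℕ) : ℕ :=
  sSup {t : ℕ | ∃ S : Set V, IsTargetSet G τ S ∧ actTime G τ S = t}

/-- The activation time of a vertex `v` for an initial set `S`. -/
noncomputable def vTime (G : SimpleGraph V) (τ : V → ℕ) (S : Set V) (v : V) : ℕ :=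
  sInf {k : ℕ | v ∈ (interval G τ)^[k] S}

/-- The set of vertices eventually activated from `S`. -/
def hull (G : SimpleGraph V) (τ : V → ℕ) (S : Set V) : Set V :=
  {v | ∃ k : ℕ, v ∈ (interval G τ)^[k] S}

end TSS

open TSS


namespace TSS

variable {V : Type*} {G : SimpleGraph V} {τ : V → ℕ}

theorem subset_interval (S : Set V) : S ⊆ interval G τ S := Set.subset_union_left

theorem monotone_iterate_interval (S : Set V) : Monotone fun k => (interval G τ)^[k] S :=
  monotone_nat_of_le_succ fun k => by
    rw [Function.iterate_succ_apply']
    exact subset_interval _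

theorem iterate_interval_eq_interval_iterate_pred (S : Set V) {k : ℕ} (hk : 1 ≤ k) :
    (interval G τ)^[k] S = interval G τ ((interval G τ)^[k - 1] S) := by
  obtain ⟨j, rfl⟩ := Nat.exists_eq_add_of_le' hk
  rw [Function.iterate_succ_apply', Nat.add_sub_cancel]

theorem notMem_interval_empty {v : V} (hv : 1 ≤ τ v) : v ∉ interval G τ ∅ := by
  rintro (h | h)
  · exact h
  · simp only [Set.inter_empty, Set.ncard_empty, Set.mem_ofPred_eq] at h
    omega

theorem le_ncard_of_mem_interval_diff {B : Set V} {v : V} (hv : v ∈ interval G τ B \ B) :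
    τ v ≤ (G.neighborSet v ∩ B).ncard :=
  hv.1.resolve_left hv.2

theorem exists_adj_mem_diff_of_mem_interval_diff {A B : Set V} {v : V}
    (hfin : (G.neighborSet v).Finite) (hB : v ∈ interval G τ B \ B) (hA : v ∉ interval G τ A) :
    ∃ u, G.Adj v u ∧ u ∈ B \ A := by
  by_contra! h
  have hsub : G.neighborSet v ∩ B ⊆ G.neighborSet v ∩ A :=
    fun u ⟨hu, huB⟩ => ⟨hu, not_not.1 fun huA => h u hu ⟨huB, huA⟩⟩
  exact hA <| Or.inr <| (le_ncard_of_mem_interval_diff hB).trans <|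
    Set.ncard_le_ncard hsub (hfin.subset Set.inter_subset_left)

theorem lt_ncard_of_mem_interval_diff {B : Set V} {u v : V} (hfin : (G.neighborSet v).Finite)
    (hv : v ∈ interval G τ B \ B) (huv : G.Adj v u) (hu : u ∉ B) :
    τ v < (G.neighborSet v).ncard :=
  (le_ncard_of_mem_interval_diff hv).trans_lt <|
    Set.ncard_lt_ncard ⟨Set.inter_subset_left, fun h => hu (h huv).2⟩ hfin

theorem vTime_eq_of_mem_iterate {S : Set V} {v : V} {k : ℕ} (hk : v ∈ (interval G τ)^[k] S)
    (hlt : ∀ j < k, v ∉ (interval G τ)^[j] S) : vTime G τ S v = k :=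
  le_antisymm (Nat.sInf_le hk) (le_csInf ⟨k, hk⟩ fun _ hj => not_lt.1 fun h => hlt _ h hj)

theorem exists_activation_path (hτ : ∀ x, 1 ≤ τ x) (hfin : ∀ x, (G.neighborSet x).Finite)
    (S : Set V) {t : ℕ} (ht : 1 ≤ t) {v : V}
    (hv : v ∈ (interval G τ)^[t] S \ (interval G τ)^[t - 1] S) :
    ∃ vs : ℕ → V, vs t = v ∧ vs 0 ∈ S ∧ (∀ i < t, G.Adj (vs i) (vs (i + 1))) ∧
      ∀ i, 1 ≤ i → i ≤ t → vs i ∈ (interval G τ)^[i] S \ (interval G τ)^[i - 1] S := by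
  induction t, ht using Nat.le_induction generalizing v with
  | base =>
    obtain ⟨u, huv, hu, -⟩ :=
      exists_adj_mem_diff_of_mem_interval_diff (hfin v) hv (notMem_interval_empty (hτ v))
    refine ⟨fun i => if i = 0 then u else v, rfl, hu, fun i hi => ?_, fun i hi hi' => ?_⟩
    · obtain rfl : i = 0 := by omega
      exact huv.symm
    · obtain rfl : i = 1 := by omega
      exact hv
  | succ n hn ih =>
    rw [Function.iterate_succ_apply', Nat.add_sub_cancel] at hv
    obtain ⟨u, huv, hu⟩ := exists_adj_mem_diff_of_mem_interval_diff (hfin v) hv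
      fun h => hv.2 (by rwa [iterate_interval_eq_interval_iterate_pred S hn])
    obtain ⟨vs, rfl, hvs0, hadj, hact⟩ := ih hu
    refine ⟨fun i => if i ≤ n then vs i else v, by simp, by simpa using hvs0, fun i hi => ?_,
      fun i hi hi' => ?_⟩
    · rcases Nat.lt_or_ge i n with hin | hin
      · simpa [hin.le, Nat.succ_le_of_lt hin] using hadj i hin
      · obtain rfl : i = n := by omega
        simpa using huv.symm
    · rcases Nat.lt_or_ge n i with hni | hin
      · obtain rfl : i = n + 1 := by omega
        simpa [Function.iterate_succ_apply'] using hv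
      · simpa [hin] using hact i hi hin

end TSS

theorem stmt8_general {V : Type*} (G : SimpleGraph V)
    (τ : V → ℕ) (hτ : ∀ x : V, 1 ≤ τ x ∧ τ x ≤ (G.neighborSet x).ncard)
    (S₀ : Set V)
    (v : V) (t : ℕ) (htpos : 1 ≤ t)
    (hv : v ∈ (TSS.interval G τ)^[t] S₀ \ (TSS.interval G τ)^[t - 1] S₀) :
    ∃ vs : ℕ → V, vs t = v ∧ vs 0 ∈ S₀ ∧
      (∀ i ≤ t, ∀ j ≤ t, vs i = vs j → i = j) ∧
      (∀ i < t, G.Adj (vs i) (vs (i + 1))) ∧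
      (∀ i : ℕ, 1 ≤ i → i ≤ t →
        vs i ∈ (TSS.interval G τ)^[i] S₀ \ (TSS.interval G τ)^[i - 1] S₀) ∧
      (∀ i : ℕ, 0 < i → i < t → τ (vs i) < (G.neighborSet (vs i)).ncard) := by
  have hfin (x : V) : (G.neighborSet x).Finite :=
    Set.finite_of_ncard_pos ((hτ x).1.trans (hτ x).2)
  obtain ⟨vs, rfl, hvs0, hadj, hact⟩ :=
    exists_activation_path (fun x => (hτ x).1) hfin S₀ htpos hv
  have hnotMem {i j : ℕ} (hi : 1 ≤ i) (hit : i ≤ t) (hj : j ≤ i - 1) :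
      vs i ∉ (interval G τ)^[j] S₀ :=
    fun h => (hact i hi hit).2 (monotone_iterate_interval S₀ hj h)
  have htime (i : ℕ) (hi : i ≤ t) : vTime G τ S₀ (vs i) = i := by
    rcases Nat.eq_zero_or_pos i with rfl | hpos
    · exact vTime_eq_of_mem_iterate hvs0 fun _ h => absurd h (Nat.not_lt_zero _)
    · exact vTime_eq_of_mem_iterate (hact i hpos hi).1 fun j hj => hnotMem hpos hi (by omega)
  refine ⟨vs, rfl, hvs0, fun i hi j hj h => ?_, hadj, hact, fun i hi hit => ?_⟩
  · rw [← htime i hi, h, htime j hj]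
  · have hvi := hact i hi hit.le
    rw [iterate_interval_eq_interval_iterate_pred S₀ hi] at hvi
    exact lt_ncard_of_mem_interval_diff (hfin _) hvi (hadj i hit)
      (hnotMem (by omega) hit (by omega))

/-- if a target set S₀ of a tree activates v at time t, there is a
path v₀,…,v_t = v with v₀ ∈ S₀, vᵢ activated at time exactly i, and all internal
vertices non-saturated. -/
theorem stmt8 {V : Type*} [Fintype V] (G : SimpleGraph V) (hT : G.IsTree)
    (τ : V → ℕ) (hτ : ∀ x : V, 1 ≤ τ x ∧ τ x ≤ (G.neighborSet x).ncard)
    (S₀ : Set V) (hS : TSS.IsTargetSet G τ S₀)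
    (v : V) (t : ℕ) (htpos : 1 ≤ t)
    (hv : v ∈ (TSS.interval G τ)^[t] S₀ \ (TSS.interval G τ)^[t - 1] S₀) :
    ∃ vs : ℕ → V, vs t = v ∧ vs 0 ∈ S₀ ∧
      (∀ i ≤ t, ∀ j ≤ t, vs i = vs j → i = j) ∧
      (∀ i < t, G.Adj (vs i) (vs (i + 1))) ∧
      (∀ i : ℕ, 1 ≤ i → i ≤ t →
        vs i ∈ (TSS.interval G τ)^[i] S₀ \ (TSS.interval G τ)^[i - 1] S₀) ∧
      (∀ i : ℕ, 0 < i → i < t → τ (vs i) < (G.neighborSet (vs i)).ncard) :=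
  stmt8_general G τ hτ S₀ v t htpos hv
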